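/- Minimax rate for iterate-averaged 3DVAR in the diagonal case (first regime): under the diagonal setup, fix γ > 0, suppose Σ_{i=1}^∞ i^{2β} v_{0,i}² < ∞, and assume τ̄_b := (t(1+2ε) + 2β)/(2(1 + 2ε + 2p)) ≤ 1 and τ̄_v := (t(1+2ε) + 2ε)/(1 + 2ε + 2p) ≤ 1. Then there exists a constant C > 0, independent of θ and n, such that for every θ ∈ (0,1] and every n ≥ 1, taking α = θ^{−(1 + 2p + 2ε)/(1 + 2p + 2β + θ(t(1+2ε) + 2ε))} · n^{(2β − 2ε + θ(t(1+2ε) + 2ε))/(1 + 2p + 2β + θ(t(1+2ε) + 2ε))}, one has B_n(α) + V_n(α) ≤ C θ^{−(2β + t(1+2ε))/(1 + 2p + 2β + θ(t(1+2ε) + 2ε))} · n^{−(t(1+2ε) + 2β)/(1 + 2p + 2β + θ(t(1+2ε) + 2ε))}. -/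

import Mathlib

open Finset

/-- `q_{n,α}(λ) = λ⁻¹ (1 − (α/(α+λ))^n)`. -/
noncomputable def qFun (n : ℕ) (α l : ℝ) : ℝ := l⁻¹ * (1 - (α / (α + l)) ^ n)

/-- Squared bias of iterate-averaged 3DVAR in the diagonal case (sequences are 1-based):
`B_n(α) = (α/n)² Σ_{i≥1} σ_i^t q_{n,α}(σ_i a_i²)² v_{0,i}²`. -/
noncomputable def Bterm (σ a v0 : ℕ → ℝ) (t : ℝ) (α : ℝ) (n : ℕ) : ℝ :=
  (α / (n : ℝ)) ^ 2 *
    ∑' i : ℕ, (σ (i + 1)) ^ t * (qFun n α (σ (i + 1) * (a (i + 1)) ^ 2)) ^ 2 * (v0 (i + 1)) ^ 2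

/-- Variance term of iterate-averaged 3DVAR in the diagonal case (sequences are 1-based):
`V_n(α) = (γ²/n²) Σ_{j=1}^n Σ_{i≥1} σ_i^{t+2} a_i² q_{j,α}(σ_i a_i²)²`. -/
noncomputable def Vterm (σ a : ℕ → ℝ) (t γ : ℝ) (α : ℝ) (n : ℕ) : ℝ :=
  (γ ^ 2 / (n : ℝ) ^ 2) *
    ∑ j ∈ Icc 1 n, ∑' i : ℕ,
      (σ (i + 1)) ^ (t + 2) * (a (i + 1)) ^ 2 * (qFun j α (σ (i + 1) * (a (i + 1)) ^ 2)) ^ 2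

/-!
Write `λᵢ = σᵢ aᵢ²`, so that `λᵢ ≥ c₁³ i^{-(1+2ε+2p)}`, and `q = q_{n,α}(λᵢ)`. Bernoulli's
inequality gives `λ q ≤ min (n λ / α) 1`, and `min x 1 ^ 2 ≤ x ^ κ` for every `κ ∈ [0, 2]`.

For the bias take `κ = ρ = (t(1+2ε) + 2β)/(1+2ε+2p) = 2 τ̄_b ≤ 2` applied to `x = α/(nλ)`:
each summand becomes `≲ (α/n)^ρ i^{2β} v₀ᵢ²`, so `B_n(α) ≲ (α/n)^ρ`. For the variance take
`κ = 1 - (1-θ) τ̄_v ∈ [0, 1]` applied to `x = jλ/α`: the `i`-th summand becomes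
`≲ (j/α)^κ i^{-(1+δ)}` with `δ = θ (t(1+2ε) + 2ε)`, and `ζ(1+δ) ≤ 1 + 1/δ` gives
`V_n(α) ≲ (1 + 1/δ) (n/α)^κ / n`.

For the tuned `α` one has `α/n = (θn)^{-(1+2p+2ε)/D}` with `D = 1 + 2p + 2β + δ`, and both
`(α/n)^ρ` and `θ⁻¹ (n/α)^κ / n` equal `(θn)^{-(t(1+2ε)+2β)/D}`; the extra factor `θ` in the
variance absorbs the `1/δ`.
-/

open Real

lemma sq_le_rpow_of_le_of_le_one {x y κ : ℝ} (hx : 0 < x) (hy : 0 ≤ y) (hyx : y ≤ x)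
    (hy1 : y ≤ 1) (hκ0 : 0 ≤ κ) (hκ2 : κ ≤ 2) : y ^ 2 ≤ x ^ κ := by
  rcases le_total 1 x with h | h
  · calc y ^ 2 ≤ 1 := pow_le_one₀ hy hy1
      _ ≤ x ^ κ := one_le_rpow h hκ0
  · calc y ^ 2 ≤ x ^ 2 := pow_le_pow_left₀ hy hyx 2
      _ = x ^ (2 : ℝ) := (rpow_natCast x 2).symm
      _ ≤ x ^ κ := rpow_le_rpow_of_exponent_ge hx h hκ2

lemma rpow_le_rpow_add_rpow {c u lo hi : ℝ} (hc : 0 < c) (hlo : lo ≤ u) (hhi : u ≤ hi) :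
    c ^ u ≤ c ^ lo + c ^ hi := by
  rcases le_total c 1 with h | h
  · linarith [rpow_le_rpow_of_exponent_ge hc h hlo, rpow_nonneg hc.le hi]
  · linarith [rpow_le_rpow_of_exponent_le h hhi, rpow_nonneg hc.le lo]

lemma rpow_le_mul_rpow_of_le_mul_rpow {x c k e z : ℝ} (hx : 0 ≤ x) (hk : 0 < k)
    (hxc : x ≤ c * k ^ e) (hz : 0 ≤ z) : x ^ z ≤ c ^ z * k ^ (e * z) := by
  have hc : 0 ≤ c := nonneg_of_mul_nonneg_left (hx.trans hxc) (rpow_pos_of_pos hk e)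
  calc x ^ z ≤ (c * k ^ e) ^ z := rpow_le_rpow hx hxc hz
    _ = c ^ z * k ^ (e * z) := by rw [mul_rpow hc (rpow_nonneg hk.le e), rpow_mul hk.le]

lemma rpow_le_mul_rpow_of_mul_rpow_le {x c k e z : ℝ} (hc : 0 < c) (hk : 0 < k)
    (hxc : c * k ^ e ≤ x) (hz : z ≤ 0) : x ^ z ≤ c ^ z * k ^ (e * z) := by
  calc x ^ z ≤ (c * k ^ e) ^ z := rpow_le_rpow_of_nonpos (by positivity) hxc hz
    _ = c ^ z * k ^ (e * z) := by rw [mul_rpow hc.le (rpow_nonneg hk.le e), rpow_mul hk.le]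

lemma tsum_add_one_rpow_neg_le {δ : ℝ} (hδ : 0 < δ) :
    ∑' n : ℕ, ((n : ℝ) + 1) ^ (-(1 + δ)) ≤ 1 + δ⁻¹ := by
  -- `ζ(s) ≤ s/(s-1)`: the integral-comparison error terms of `ZetaAsymptotics` are nonnegative.
  have hterm : 0 ≤ ZetaAsymptotics.termTSum (1 + δ) :=
    tsum_nonneg fun n ↦ ZetaAsymptotics.term_nonneg (n + 1) _
  rw [ZetaAsymptotics.termTSum_of_lt (by linarith), sub_nonneg, add_sub_cancel_left] at hterm
  have heq : ∀ n : ℕ, ((n : ℝ) + 1) ^ (-(1 + δ)) = 1 / ((n : ℝ) + 1) ^ (1 + δ) := fun n ↦ by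
    rw [rpow_neg (by positivity), one_div]
  simp_rw [heq]
  calc ∑' n : ℕ, 1 / ((n : ℝ) + 1) ^ (1 + δ)
      = (1 + δ) * (1 / (1 + δ) * ∑' n : ℕ, 1 / ((n : ℝ) + 1) ^ (1 + δ)) := by
        field_simp
    _ ≤ (1 + δ) * (1 / δ) := by gcongr
    _ = 1 + δ⁻¹ := by field_simp; ring

section qFun

variable {n : ℕ} {α l : ℝ}

lemma qFun_nonneg (hα : 0 ≤ α) (hl : 0 < l) : 0 ≤ qFun n α l := by
  have h0 : 0 ≤ α / (α + l) := by positivity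
  have h1 : α / (α + l) ≤ 1 := (div_le_one (by positivity)).2 (by linarith)
  exact mul_nonneg (inv_nonneg.2 hl.le) (sub_nonneg.2 (pow_le_one₀ h0 h1))

lemma qFun_le_inv (hα : 0 ≤ α) (hl : 0 < l) : qFun n α l ≤ l⁻¹ := by
  have h0 : 0 ≤ (α / (α + l)) ^ n := by positivity
  exact mul_le_of_le_one_right (inv_nonneg.2 hl.le) (by linarith)

lemma qFun_le_div (hα : 0 < α) (hl : 0 < l) : qFun n α l ≤ n / α := by
  have hbern := one_add_mul_le_pow (a := -(l / (α + l))) (by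
    have : l / (α + l) ≤ 1 := (div_le_one (by positivity)).2 (by linarith)
    linarith) n
  have hr : 1 + -(l / (α + l)) = α / (α + l) := by field_simp; ring
  rw [hr] at hbern
  calc qFun n α l ≤ l⁻¹ * (n * (l / (α + l))) := by
        unfold qFun; gcongr; linarith
    _ = n / (α + l) := by field_simp
    _ ≤ n / α := by gcongr; linarith

end qFun

lemma mul_rpow_le_mul_sq {s a c k r p : ℝ} (hc : 0 < c) (hk : 0 < k) (hs : c * k ^ (-r) ≤ s)
    (ha : c * k ^ (-p) ≤ a) : c ^ 3 * k ^ (-(r + 2 * p)) ≤ s * a ^ 2 := by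
  calc c ^ 3 * k ^ (-(r + 2 * p)) = c * k ^ (-r) * (c * k ^ (-p)) ^ 2 := by
        rw [mul_pow, ← rpow_natCast (k ^ (-p)), ← rpow_mul hk.le,
          show -(r + 2 * p) = -r + -p * ((2 : ℕ) : ℝ) by push_cast; ring, rpow_add hk]
        ring
    _ ≤ s * a ^ 2 := by
        have : 0 ≤ s := le_trans (by positivity) hs
        gcongr

lemma bias_summand_le {s a v c₁ c₂ k r p t ρ α : ℝ} {n : ℕ} (hn : 0 < n) (hα : 0 < α)
    (hk : 0 < k) (hc₁ : 0 < c₁) (hsl : c₁ * k ^ (-r) ≤ s) (hsu : s ≤ c₂ * k ^ (-r))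
    (ha : c₁ * k ^ (-p) ≤ a) (ht : 0 ≤ t) (hρ0 : 0 ≤ ρ) (hρ2 : ρ ≤ 2) :
    (α / n) ^ 2 * (s ^ t * qFun n α (s * a ^ 2) ^ 2 * v ^ 2) ≤
      c₂ ^ t * (c₁ ^ 3) ^ (-ρ) * (α / n) ^ ρ * (k ^ ((r + 2 * p) * ρ - r * t) * v ^ 2) := by
  have hs : 0 < s := lt_of_lt_of_le (by positivity) hsl
  have hl := mul_rpow_le_mul_sq hc₁ hk hsl ha
  set l := s * a ^ 2
  have hl0 : 0 < l := lt_of_lt_of_le (by positivity) hl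
  have hn0 : (0 : ℝ) < n := by exact_mod_cast hn
  have hq0 := qFun_nonneg (n := n) hα.le hl0
  have hsq : (α / n * qFun n α l) ^ 2 ≤ (α / n) ^ ρ * l ^ (-ρ) := by
    calc (α / n * qFun n α l) ^ 2 ≤ (α / n * l⁻¹) ^ ρ := by
          refine sq_le_rpow_of_le_of_le_one (by positivity) (by positivity) ?_ ?_ hρ0 hρ2
          · gcongr; exact qFun_le_inv hα.le hl0
          · calc α / n * qFun n α l ≤ α / n * (n / α) := by gcongr; exact qFun_le_div hα hl0
              _ = 1 := by field_simp
      _ = (α / n) ^ ρ * l ^ (-ρ) := by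
          rw [mul_rpow (by positivity) (by positivity), inv_rpow hl0.le, rpow_neg hl0.le]
  have hlρ : l ^ (-ρ) ≤ (c₁ ^ 3) ^ (-ρ) * k ^ ((r + 2 * p) * ρ) := by
    have := rpow_le_mul_rpow_of_mul_rpow_le (by positivity) hk hl (neg_nonpos.2 hρ0)
    rwa [neg_mul_neg] at this
  have hst : s ^ t ≤ c₂ ^ t * k ^ (-r * t) := rpow_le_mul_rpow_of_le_mul_rpow hs.le hk hsu ht
  calc (α / n) ^ 2 * (s ^ t * qFun n α l ^ 2 * v ^ 2)
      = s ^ t * (α / n * qFun n α l) ^ 2 * v ^ 2 := by ring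
    _ ≤ c₂ ^ t * k ^ (-r * t) * ((α / n) ^ ρ * ((c₁ ^ 3) ^ (-ρ) * k ^ ((r + 2 * p) * ρ))) *
        v ^ 2 := by
        have hsq' := hsq.trans (mul_le_mul_of_nonneg_left hlρ (by positivity))
        exact mul_le_mul_of_nonneg_right
          (mul_le_mul hst hsq' (sq_nonneg _) ((rpow_nonneg hs.le t).trans hst)) (sq_nonneg v)
    _ = _ := by
        rw [show (r + 2 * p) * ρ - r * t = -r * t + (r + 2 * p) * ρ by ring, rpow_add hk]
        ring

lemma variance_summand_le {s a c₁ c₂ k r p t κ α : ℝ} {j : ℕ} (hj : 0 < j) (hα : 0 < α)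
    (hk : 0 < k) (hc₁ : 0 < c₁) (hsl : c₁ * k ^ (-r) ≤ s) (hsu : s ≤ c₂ * k ^ (-r))
    (ha : c₁ * k ^ (-p) ≤ a) (ht : 0 ≤ t) (hκ0 : 0 ≤ κ) (hκ1 : κ ≤ 1) :
    s ^ (t + 2) * a ^ 2 * qFun j α (s * a ^ 2) ^ 2 ≤
      c₂ ^ (t + 1) * ((c₁ ^ 3)⁻¹ + 1) * (j / α) ^ κ *
        k ^ ((r + 2 * p) * (1 - κ) - r * (t + 1)) := by
  have hs : 0 < s := lt_of_lt_of_le (by positivity) hsl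
  have hl := mul_rpow_le_mul_sq hc₁ hk hsl ha
  set l := s * a ^ 2
  have hl0 : 0 < l := lt_of_lt_of_le (by positivity) hl
  have hj0 : (0 : ℝ) < j := by exact_mod_cast hj
  have hq0 := qFun_nonneg (n := j) hα.le hl0
  have hsq : (l * qFun j α l) ^ 2 ≤ (j / α) ^ κ * l ^ κ := by
    calc (l * qFun j α l) ^ 2 ≤ (j / α * l) ^ κ := by
          refine sq_le_rpow_of_le_of_le_one (by positivity) (by positivity) ?_ ?_ hκ0
            (by linarith)
          · rw [mul_comm]; gcongr; exact qFun_le_div hα hl0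
          · calc l * qFun j α l ≤ l * l⁻¹ := by gcongr; exact qFun_le_inv hα.le hl0
              _ = 1 := mul_inv_cancel₀ hl0.ne'
      _ = (j / α) ^ κ * l ^ κ := mul_rpow (by positivity) hl0.le
  have hlκ : l ^ (κ - 1) ≤ (c₁ ^ 3) ^ (κ - 1) * k ^ ((r + 2 * p) * (1 - κ)) := by
    have := rpow_le_mul_rpow_of_mul_rpow_le (by positivity) hk hl (by linarith : κ - 1 ≤ 0)
    rwa [show -(r + 2 * p) * (κ - 1) = (r + 2 * p) * (1 - κ) by ring] at this
  have hc : (c₁ ^ 3) ^ (κ - 1) ≤ (c₁ ^ 3)⁻¹ + 1 := by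
    have := rpow_le_rpow_add_rpow (c := c₁ ^ 3) (by positivity)
      (by linarith : (-1 : ℝ) ≤ κ - 1) (by linarith : κ - 1 ≤ 0)
    rwa [rpow_neg_one, rpow_zero] at this
  have hst : s ^ (t + 1) ≤ c₂ ^ (t + 1) * k ^ (-r * (t + 1)) :=
    rpow_le_mul_rpow_of_le_mul_rpow hs.le hk hsu (by linarith)
  calc s ^ (t + 2) * a ^ 2 * qFun j α l ^ 2 = s ^ (t + 1) * ((l * qFun j α l) ^ 2 / l) := by
        rw [show t + 2 = (t + 1) + 1 by ring, rpow_add_one hs.ne']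
        field_simp
        exact mul_comm _ _
    _ ≤ s ^ (t + 1) * ((j / α) ^ κ * l ^ (κ - 1)) := by
        gcongr
        rw [rpow_sub_one hl0.ne', ← mul_div_assoc]
        gcongr
    _ ≤ c₂ ^ (t + 1) * k ^ (-r * (t + 1)) *
        ((j / α) ^ κ * (((c₁ ^ 3)⁻¹ + 1) * k ^ ((r + 2 * p) * (1 - κ)))) := by
        have hlκ' := hlκ.trans (mul_le_mul_of_nonneg_right hc (by positivity))
        refine mul_le_mul hst (mul_le_mul_of_nonneg_left hlκ' (by positivity)) (by positivity)
          ((rpow_nonneg hs.le _).trans hst)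
    _ = _ := by
        rw [show (r + 2 * p) * (1 - κ) - r * (t + 1) = -r * (t + 1) + (r + 2 * p) * (1 - κ) by
          ring, rpow_add hk]
        ring

lemma shifted_bounds {f : ℕ → ℝ} {c₁ c₂ e : ℝ}
    (h : ∀ i : ℕ, 1 ≤ i → c₁ * (i : ℝ) ^ e ≤ f i ∧ f i ≤ c₂ * (i : ℝ) ^ e) (i : ℕ) :
    c₁ * ((i : ℝ) + 1) ^ e ≤ f (i + 1) ∧ f (i + 1) ≤ c₂ * ((i : ℝ) + 1) ^ e := by
  simpa using h (i + 1) (by omega)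

lemma le_of_shifted_bounds {f : ℕ → ℝ} {c₁ c₂ e : ℝ}
    (h : ∀ i : ℕ, c₁ * ((i : ℝ) + 1) ^ e ≤ f (i + 1) ∧ f (i + 1) ≤ c₂ * ((i : ℝ) + 1) ^ e) :
    c₁ ≤ c₂ := by
  simpa using (h 0).1.trans (h 0).2

section Sums

variable {σ a : ℕ → ℝ} {c₁ c₂ r p t α : ℝ} {n : ℕ}

lemma Bterm_le {v0 : ℕ → ℝ} {β ρ : ℝ} (hc₁ : 0 < c₁)
    (hσ : ∀ i : ℕ, c₁ * ((i : ℝ) + 1) ^ (-r) ≤ σ (i + 1) ∧ σ (i + 1) ≤ c₂ * ((i : ℝ) + 1) ^ (-r))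
    (ha : ∀ i : ℕ, c₁ * ((i : ℝ) + 1) ^ (-p) ≤ a (i + 1))
    (hv : Summable fun i : ℕ ↦ ((i : ℝ) + 1) ^ (2 * β) * v0 (i + 1) ^ 2)
    (ht : 0 ≤ t) (hρ0 : 0 ≤ ρ) (hρ2 : ρ ≤ 2) (hρ : (r + 2 * p) * ρ - r * t = 2 * β)
    (hα : 0 < α) (hn : 0 < n) :
    Bterm σ a v0 t α n ≤ c₂ ^ t * (c₁ ^ 3) ^ (-ρ) *
      (∑' i : ℕ, ((i : ℝ) + 1) ^ (2 * β) * v0 (i + 1) ^ 2) * (α / n) ^ ρ := by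
  have hterm := fun i : ℕ ↦ bias_summand_le (v := v0 (i + 1)) hn hα
    (by positivity : (0 : ℝ) < i + 1) hc₁ (hσ i).1 (hσ i).2 (ha i) ht hρ0 hρ2
  simp_rw [hρ] at hterm
  have hnonneg : ∀ i : ℕ, 0 ≤ (α / n) ^ 2 * (σ (i + 1) ^ t *
      qFun n α (σ (i + 1) * a (i + 1) ^ 2) ^ 2 * v0 (i + 1) ^ 2) := fun i ↦ by
    have : 0 ≤ σ (i + 1) := le_trans (by positivity) (hσ i).1
    positivity
  have hg := hv.mul_left (c₂ ^ t * (c₁ ^ 3) ^ (-ρ) * (α / n) ^ ρ)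
  rw [Bterm, ← tsum_mul_left]
  calc _ ≤ _ := (hg.of_nonneg_of_le hnonneg hterm).tsum_le_tsum hterm hg
    _ = _ := by rw [tsum_mul_left]; ring

lemma Vterm_le {γ κ δ : ℝ} (hc₁ : 0 < c₁)
    (hσ : ∀ i : ℕ, c₁ * ((i : ℝ) + 1) ^ (-r) ≤ σ (i + 1) ∧ σ (i + 1) ≤ c₂ * ((i : ℝ) + 1) ^ (-r))
    (ha : ∀ i : ℕ, c₁ * ((i : ℝ) + 1) ^ (-p) ≤ a (i + 1))
    (ht : 0 ≤ t) (hκ0 : 0 ≤ κ) (hκ1 : κ ≤ 1) (hδ : 0 < δ)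
    (hκδ : (r + 2 * p) * (1 - κ) - r * (t + 1) = -(1 + δ)) (hα : 0 < α) (hn : 0 < n) :
    Vterm σ a t γ α n ≤
      γ ^ 2 * (c₂ ^ (t + 1) * ((c₁ ^ 3)⁻¹ + 1) * (1 + δ⁻¹)) * (n / α) ^ κ / n := by
  have hc₂ : 0 < c₂ := hc₁.trans_le (le_of_shifted_bounds hσ)
  have hζ : Summable fun i : ℕ ↦ ((i : ℝ) + 1) ^ (-(1 + δ)) := by
    have := (summable_nat_add_iff 1).2 (Real.summable_nat_rpow.2 (by linarith : -(1 + δ) < -1))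
    simpa using this
  set C := c₂ ^ (t + 1) * ((c₁ ^ 3)⁻¹ + 1) * (1 + δ⁻¹)
  have hinner : ∀ j ∈ Icc 1 n, ∑' i : ℕ, σ (i + 1) ^ (t + 2) * a (i + 1) ^ 2 *
      qFun j α (σ (i + 1) * a (i + 1) ^ 2) ^ 2 ≤ C * (n / α) ^ κ := by
    intro j hj
    obtain ⟨hj1, hjn⟩ := mem_Icc.1 hj
    have hterm := fun i : ℕ ↦ variance_summand_le hj1 hα (by positivity : (0 : ℝ) < i + 1) hc₁
      (hσ i).1 (hσ i).2 (ha i) ht hκ0 hκ1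
    simp_rw [hκδ] at hterm
    have hnonneg : ∀ i : ℕ, 0 ≤ σ (i + 1) ^ (t + 2) * a (i + 1) ^ 2 *
        qFun j α (σ (i + 1) * a (i + 1) ^ 2) ^ 2 := fun i ↦ by
      have : 0 ≤ σ (i + 1) := le_trans (by positivity) (hσ i).1
      positivity
    have hg := hζ.mul_left (c₂ ^ (t + 1) * ((c₁ ^ 3)⁻¹ + 1) * (j / α) ^ κ)
    calc _ ≤ _ := (hg.of_nonneg_of_le hnonneg hterm).tsum_le_tsum hterm hg
      _ = c₂ ^ (t + 1) * ((c₁ ^ 3)⁻¹ + 1) * (j / α) ^ κ *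
          ∑' i : ℕ, ((i : ℝ) + 1) ^ (-(1 + δ)) := tsum_mul_left
      _ ≤ c₂ ^ (t + 1) * ((c₁ ^ 3)⁻¹ + 1) * (n / α) ^ κ * (1 + δ⁻¹) := by
          gcongr
          exact tsum_add_one_rpow_neg_le hδ
      _ = C * (n / α) ^ κ := by ring
  have hn0 : (0 : ℝ) < n := by exact_mod_cast hn
  calc Vterm σ a t γ α n ≤ γ ^ 2 / (n : ℝ) ^ 2 * ∑ _j ∈ Icc 1 n, C * (n / α) ^ κ :=
        mul_le_mul_of_nonneg_left (sum_le_sum hinner) (by positivity)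
    _ = γ ^ 2 * C * (n / α) ^ κ / n := by
        rw [sum_const, Nat.card_Icc, nsmul_eq_mul, Nat.add_sub_cancel]
        field_simp

end Sums

noncomputable def tunedAlpha (ε p t β θ : ℝ) (n : ℕ) : ℝ :=
  θ ^ (-(1 + 2 * p + 2 * ε) / (1 + 2 * p + 2 * β + θ * (t * (1 + 2 * ε) + 2 * ε))) *
    (n : ℝ) ^ ((2 * β - 2 * ε + θ * (t * (1 + 2 * ε) + 2 * ε)) /
      (1 + 2 * p + 2 * β + θ * (t * (1 + 2 * ε) + 2 * ε)))

noncomputable def minimaxRate (ε p t β θ : ℝ) (n : ℕ) : ℝ :=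
  θ ^ (-(2 * β + t * (1 + 2 * ε)) / (1 + 2 * p + 2 * β + θ * (t * (1 + 2 * ε) + 2 * ε))) *
    (n : ℝ) ^ (-(t * (1 + 2 * ε) + 2 * β) / (1 + 2 * p + 2 * β + θ * (t * (1 + 2 * ε) + 2 * ε)))

section Rates

variable {ε p t β θ : ℝ} {n : ℕ}

lemma tunedAlpha_div (hθ : 0 < θ) (hn : 0 < n)
    (hD : 1 + 2 * p + 2 * β + θ * (t * (1 + 2 * ε) + 2 * ε) ≠ 0) :
    tunedAlpha ε p t β θ n / n =
      (θ * n) ^ (-(1 + 2 * p + 2 * ε) / (1 + 2 * p + 2 * β + θ * (t * (1 + 2 * ε) + 2 * ε))) := by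
  have hn0 : (0 : ℝ) < n := by exact_mod_cast hn
  rw [tunedAlpha, mul_div_assoc, ← rpow_sub_one hn0.ne', mul_rpow hθ.le hn0.le]
  congr 2
  field_simp
  ring

lemma minimaxRate_eq (hθ : 0 < θ) :
    minimaxRate ε p t β θ n =
      (θ * n) ^ (-(t * (1 + 2 * ε) + 2 * β) /
        (1 + 2 * p + 2 * β + θ * (t * (1 + 2 * ε) + 2 * ε))) := by
  rw [minimaxRate, mul_rpow hθ.le (Nat.cast_nonneg n), add_comm (2 * β)]

lemma tunedAlpha_div_rpow {ρ : ℝ} (hθ : 0 < θ) (hn : 0 < n)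
    (hD : 1 + 2 * p + 2 * β + θ * (t * (1 + 2 * ε) + 2 * ε) ≠ 0)
    (hρ : (1 + 2 * p + 2 * ε) * ρ = t * (1 + 2 * ε) + 2 * β) :
    (tunedAlpha ε p t β θ n / n) ^ ρ = minimaxRate ε p t β θ n := by
  rw [tunedAlpha_div hθ hn hD, minimaxRate_eq hθ, ← rpow_mul (by positivity)]
  congr 1
  field_simp
  linarith

lemma div_tunedAlpha_rpow_div {κ : ℝ} (hθ : 0 < θ) (hn : 0 < n)
    (hD : 1 + 2 * p + 2 * β + θ * (t * (1 + 2 * ε) + 2 * ε) ≠ 0)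
    (hκ : (1 + 2 * p + 2 * ε) * κ =
      1 + 2 * p + 2 * β + θ * (t * (1 + 2 * ε) + 2 * ε) - (t * (1 + 2 * ε) + 2 * β)) :
    (n / tunedAlpha ε p t β θ n) ^ κ / n = θ * minimaxRate ε p t β θ n := by
  have hn0 : (0 : ℝ) < n := by exact_mod_cast hn
  have hx : (0 : ℝ) < θ * n := by positivity
  have hexp : -(-(1 + 2 * p + 2 * ε) / (1 + 2 * p + 2 * β + θ * (t * (1 + 2 * ε) + 2 * ε))) * κ =
      1 + -(t * (1 + 2 * ε) + 2 * β) / (1 + 2 * p + 2 * β + θ * (t * (1 + 2 * ε) + 2 * ε)) := by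
    field_simp
    linarith
  rw [← inv_div (tunedAlpha ε p t β θ n), tunedAlpha_div hθ hn hD, minimaxRate_eq hθ,
    ← rpow_neg hx.le, ← rpow_mul hx.le, hexp, rpow_add hx, rpow_one, div_eq_iff hn0.ne']
  ring

end Rates

section Tuned

variable {σ a : ℕ → ℝ} {ε p t β θ c₁ c₂ : ℝ} {n : ℕ}

lemma tunedAlpha_pos (hθ : 0 < θ) (hn : 0 < n) : 0 < tunedAlpha ε p t β θ n := by
  have hn0 : (0 : ℝ) < n := by exact_mod_cast hn
  unfold tunedAlpha
  positivity

lemma Bterm_tunedAlpha_le {v0 : ℕ → ℝ} (hε : 0 < ε) (hp : 0 < p) (ht : 0 ≤ t) (hβ : 0 ≤ β)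
    (hc₁ : 0 < c₁)
    (hσ : ∀ i : ℕ, c₁ * ((i : ℝ) + 1) ^ (-(1 + 2 * ε)) ≤ σ (i + 1) ∧
      σ (i + 1) ≤ c₂ * ((i : ℝ) + 1) ^ (-(1 + 2 * ε)))
    (ha : ∀ i : ℕ, c₁ * ((i : ℝ) + 1) ^ (-p) ≤ a (i + 1))
    (hv : Summable fun i : ℕ ↦ ((i : ℝ) + 1) ^ (2 * β) * v0 (i + 1) ^ 2)
    (hτb : (t * (1 + 2 * ε) + 2 * β) / (2 * (1 + 2 * ε + 2 * p)) ≤ 1)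
    (hθ : 0 < θ) (hn : 0 < n) :
    Bterm σ a v0 t (tunedAlpha ε p t β θ n) n ≤
      c₂ ^ t * (c₁ ^ 3) ^ (-((t * (1 + 2 * ε) + 2 * β) / (1 + 2 * ε + 2 * p))) *
        (∑' i : ℕ, ((i : ℝ) + 1) ^ (2 * β) * v0 (i + 1) ^ 2) * minimaxRate ε p t β θ n := by
  have hs : 0 < 1 + 2 * ε + 2 * p := by positivity
  have hD : 0 < 1 + 2 * p + 2 * β + θ * (t * (1 + 2 * ε) + 2 * ε) := by positivity
  have hρ2 : (t * (1 + 2 * ε) + 2 * β) / (1 + 2 * ε + 2 * p) ≤ 2 := by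
    rw [div_le_one (by positivity)] at hτb
    rw [div_le_iff₀ hs]
    linarith
  refine (Bterm_le hc₁ hσ ha hv ht (by positivity) hρ2 ?_ (tunedAlpha_pos hθ hn) hn).trans_eq ?_
  · field_simp
    ring
  · rw [tunedAlpha_div_rpow hθ hn hD.ne' (by field_simp; ring)]

lemma Vterm_tunedAlpha_le {γ : ℝ} (hε : 0 < ε) (hp : 0 < p) (ht : 0 ≤ t) (hβ : 0 ≤ β)
    (hc₁ : 0 < c₁)
    (hσ : ∀ i : ℕ, c₁ * ((i : ℝ) + 1) ^ (-(1 + 2 * ε)) ≤ σ (i + 1) ∧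
      σ (i + 1) ≤ c₂ * ((i : ℝ) + 1) ^ (-(1 + 2 * ε)))
    (ha : ∀ i : ℕ, c₁ * ((i : ℝ) + 1) ^ (-p) ≤ a (i + 1))
    (hτv : (t * (1 + 2 * ε) + 2 * ε) / (1 + 2 * ε + 2 * p) ≤ 1)
    (hθ : θ ∈ Set.Ioc 0 1) (hn : 0 < n) :
    Vterm σ a t γ (tunedAlpha ε p t β θ n) n ≤
      γ ^ 2 * (c₂ ^ (t + 1) * ((c₁ ^ 3)⁻¹ + 1) * (1 + (t * (1 + 2 * ε) + 2 * ε)⁻¹)) *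
        minimaxRate ε p t β θ n := by
  obtain ⟨hθ0, hθ1⟩ := hθ
  set u := t * (1 + 2 * ε) + 2 * ε
  set s := 1 + 2 * ε + 2 * p
  have hu : 0 < u := by positivity
  have hs : 0 < s := by positivity
  have hD : 0 < 1 + 2 * p + 2 * β + θ * u := by positivity
  have hus : u ≤ s := (div_le_one hs).1 hτv
  set κ := 1 - (1 - θ) * u / s
  have hκ0 : 0 ≤ κ := by
    rw [sub_nonneg, div_le_one hs]
    nlinarith
  have hκ1 : κ ≤ 1 := by
    have : 0 ≤ (1 - θ) * u / s := div_nonneg (mul_nonneg (by linarith) hu.le) hs.le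
    linarith
  have hα : 0 < tunedAlpha ε p t β θ n := tunedAlpha_pos hθ0 hn
  have hV := Vterm_le (γ := γ) hc₁ hσ ha ht hκ0 hκ1 (mul_pos hθ0 hu)
    (by simp only [κ, u, s]; field_simp; ring) hα hn
  have hrate := div_tunedAlpha_rpow_div (κ := κ) hθ0 hn hD.ne'
    (by simp only [κ, u, s]; field_simp; ring)
  have hR : 0 ≤ minimaxRate ε p t β θ n := by rw [minimaxRate_eq hθ0]; positivity
  have hθu : (1 + (θ * u)⁻¹) * θ ≤ 1 + u⁻¹ := by
    have : (1 + (θ * u)⁻¹) * θ = θ + u⁻¹ := by field_simp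
    linarith
  calc _ ≤ _ := hV
    _ = γ ^ 2 * (c₂ ^ (t + 1) * ((c₁ ^ 3)⁻¹ + 1)) * ((1 + (θ * u)⁻¹) * θ) *
        minimaxRate ε p t β θ n := by rw [mul_div_assoc, hrate]; ring
    _ ≤ γ ^ 2 * (c₂ ^ (t + 1) * ((c₁ ^ 3)⁻¹ + 1)) * (1 + u⁻¹) * minimaxRate ε p t β θ n := by
      have hc₂ : 0 < c₂ := hc₁.trans_le (le_of_shifted_bounds hσ)
      gcongr
    _ = _ := by ring

end Tuned

/-- Minimax rate for iterate-averaged 3DVAR in the diagonal case (first regime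
`τ̄_b ≤ 1`, `τ̄_v ≤ 1`): with the optimally scaled
`α = θ^{−(1+2p+2ε)/(1+2p+2β+θ(t(1+2ε)+2ε))} n^{(2β−2ε+θ(t(1+2ε)+2ε))/(1+2p+2β+θ(t(1+2ε)+2ε))}`,
one has `B_n(α)+V_n(α) ≤ C θ^{−(2β+t(1+2ε))/(1+2p+2β+θ(t(1+2ε)+2ε))}
n^{−(t(1+2ε)+2β)/(1+2p+2β+θ(t(1+2ε)+2ε))}` with `C` independent of `θ` and `n`. -/
theorem diagonal_minimax_first_regime
    (ε p t β γ : ℝ) (hε : 0 < ε) (hp : 0 < p) (ht : 0 ≤ t) (hβ : 0 ≤ β) (hγ : 0 < γ)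
    (σ a v0 : ℕ → ℝ) (c₁ c₂ : ℝ) (hc₁ : 0 < c₁) (hc₁₂ : c₁ ≤ c₂)
    (hσ : ∀ i : ℕ, 1 ≤ i → c₁ * (i : ℝ) ^ (-1 - 2 * ε) ≤ σ i ∧ σ i ≤ c₂ * (i : ℝ) ^ (-1 - 2 * ε))
    (ha : ∀ i : ℕ, 1 ≤ i → c₁ * (i : ℝ) ^ (-p) ≤ a i ∧ a i ≤ c₂ * (i : ℝ) ^ (-p))
    (hv : Summable (fun i : ℕ => ((i : ℝ) + 1) ^ (2 * β) * (v0 (i + 1)) ^ 2))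
    (hτb : (t * (1 + 2 * ε) + 2 * β) / (2 * (1 + 2 * ε + 2 * p)) ≤ 1)
    (hτv : (t * (1 + 2 * ε) + 2 * ε) / (1 + 2 * ε + 2 * p) ≤ 1) :
    ∃ C : ℝ, 0 < C ∧ ∀ θ : ℝ, θ ∈ Set.Ioc (0:ℝ) 1 → ∀ n : ℕ, 1 ≤ n →
      Bterm σ a v0 t
          (θ ^ (-(1 + 2 * p + 2 * ε) / (1 + 2 * p + 2 * β + θ * (t * (1 + 2 * ε) + 2 * ε))) *
            (n : ℝ) ^ ((2 * β - 2 * ε + θ * (t * (1 + 2 * ε) + 2 * ε)) /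
              (1 + 2 * p + 2 * β + θ * (t * (1 + 2 * ε) + 2 * ε)))) n +
        Vterm σ a t γ
          (θ ^ (-(1 + 2 * p + 2 * ε) / (1 + 2 * p + 2 * β + θ * (t * (1 + 2 * ε) + 2 * ε))) *
            (n : ℝ) ^ ((2 * β - 2 * ε + θ * (t * (1 + 2 * ε) + 2 * ε)) /
              (1 + 2 * p + 2 * β + θ * (t * (1 + 2 * ε) + 2 * ε)))) n ≤
        C * θ ^ (-(2 * β + t * (1 + 2 * ε)) /
            (1 + 2 * p + 2 * β + θ * (t * (1 + 2 * ε) + 2 * ε))) *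
          (n : ℝ) ^ (-(t * (1 + 2 * ε) + 2 * β) /
            (1 + 2 * p + 2 * β + θ * (t * (1 + 2 * ε) + 2 * ε))) := by
  simp_rw [show -1 - 2 * ε = -(1 + 2 * ε) by ring] at hσ
  have hσ' := shifted_bounds hσ
  have ha' := fun i ↦ (shifted_bounds ha i).1
  have hc₂ : 0 < c₂ := hc₁.trans_le hc₁₂
  have hW : 0 ≤ ∑' i : ℕ, ((i : ℝ) + 1) ^ (2 * β) * v0 (i + 1) ^ 2 :=
    tsum_nonneg fun i ↦ by positivity
  refine ⟨c₂ ^ t * (c₁ ^ 3) ^ (-((t * (1 + 2 * ε) + 2 * β) / (1 + 2 * ε + 2 * p))) *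
      (∑' i : ℕ, ((i : ℝ) + 1) ^ (2 * β) * v0 (i + 1) ^ 2) +
    γ ^ 2 * (c₂ ^ (t + 1) * ((c₁ ^ 3)⁻¹ + 1) * (1 + (t * (1 + 2 * ε) + 2 * ε)⁻¹)),
    by positivity, fun θ hθ n hn ↦ ?_⟩
  have hB := Bterm_tunedAlpha_le hε hp ht hβ hc₁ hσ' ha' hv hτb hθ.1 hn
  have hV := Vterm_tunedAlpha_le (γ := γ) hε hp ht hβ hc₁ hσ' ha' hτv hθ hn
  exact (add_le_add hB hV).trans_eq (by rw [← add_mul, minimaxRate]; ring)
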